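/- arXiv:2012.15617 — 2 statements merged into one kernel-verified Lean document; each statement's English description precedes it below -/
import Mathlib

section
/- Every homogeneous regular expression R (not equal to ε, built without ∅ and without star) is equivalent to a union B_1 + ... + B_ℓ of at most ℓ ≤ |R| log-product expressions, where |R| is the number of nodes in the syntax tree of R. -/
inductive RE (α : Type) : Type where
  | eps : RE α
  | char : α → RE α
  | union : RE α → RE α → RE α
  | cat : RE α → RE α → RE α

namespace RE
variable {α : Type}

/-- The language described by a star-free regular expression. -/
def lang : RE α → Language α
  | eps => 1
  | char a => {[a]}
  | union r s => r.lang + s.lang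
  | cat r s => r.lang * s.lang

/-- Reverse polish length: the number of nodes of the syntax tree. -/
def size : RE α → ℕ
  | eps => 1
  | char _ => 1
  | union r s => r.size + s.size + 1
  | cat r s => r.size + s.size + 1

/-- `r` is homogeneous of degree `d`: every described word has length `d`. -/
def Homog (r : RE α) (d : ℕ) : Prop := ∀ w ∈ r.lang, w.length = d

/-- Log-product expressions. -/
inductive LogProd : RE α → Prop where
  | char (a : α) : LogProd (char a)
  | catL {B₁ B₂ : RE α} {d₁ d₂ : ℕ} : LogProd B₁ → B₁.Homog d₁ → B₂.Homog d₂ →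
      d₂ ≤ d₁ → LogProd (cat B₁ B₂)
  | catR {B₁ B₂ : RE α} {d₁ d₂ : ℕ} : LogProd B₁ → B₁.Homog d₁ → B₂.Homog d₂ →
      d₂ ≤ d₁ → LogProd (cat B₂ B₁)

end RE

/-!
Induct on `R`. A union is covered by concatenating the covers of its two sides. In a
concatenation `R₁ · R₂` both factors are homogeneous, of degrees `d₁ + d₂ = d`, because their
languages are nonempty; cover the factor of larger degree, which is then not `ε`, and multiply
every member of its cover by the other factor, which keeps the count and yields log-products.
-/

theorem Language.mem_list_sum {α : Type} {L : List (Language α)} {w : List α} :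
    w ∈ L.sum ↔ ∃ l ∈ L, w ∈ l := by
  induction L with
  | nil => simp
  | cons l L ih => simp [Language.mem_add, ih]

namespace RE
variable {α : Type} {r s : RE α} {d : ℕ}

theorem lang_nonempty : ∀ r : RE α, r.lang.Nonempty
  | eps => ⟨[], rfl⟩
  | char a => ⟨[a], rfl⟩
  | union r _ => r.lang_nonempty.mono le_sup_left
  | cat r s =>
    let ⟨u, hu⟩ := r.lang_nonempty
    let ⟨v, hv⟩ := s.lang_nonempty
    ⟨u ++ v, Language.append_mem_mul hu hv⟩

theorem Homog.mono (h : r.Homog d) (hsr : s.lang ≤ r.lang) : s.Homog d :=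
  fun w hw => h w (hsr hw)

theorem Homog.eq_zero_of_eps (h : (eps : RE α).Homog d) : d = 0 :=
  (h [] rfl).symm

theorem Homog.exists_of_cat (h : (cat r s).Homog d) :
    ∃ d₁ d₂, d₁ + d₂ = d ∧ r.Homog d₁ ∧ s.Homog d₂ := by
  obtain ⟨u, hu⟩ := r.lang_nonempty
  obtain ⟨v, hv⟩ := s.lang_nonempty
  have hlen : ∀ {u' v'}, u' ∈ r.lang → v' ∈ s.lang → u'.length + v'.length = d :=
    fun hu' hv' => by simpa using h _ (Language.append_mem_mul hu' hv')
  exact ⟨u.length, v.length, hlen hu hv,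
    fun u' hu' => by have := hlen hu' hv; have := hlen hu hv; omega,
    fun v' hv' => by have := hlen hu hv'; have := hlen hu hv; omega⟩

theorem Homog.of_mem_cover {Bs : List (RE α)} (h : r.Homog d) (hcover : r.lang = (Bs.map lang).sum)
    {B : RE α} (hB : B ∈ Bs) : B.Homog d :=
  h.mono (hcover ▸ List.le_sum_of_mem (List.mem_map_of_mem hB))

theorem lang_sum_map_cat_left (Bs : List (RE α)) (s : RE α) :
    ((Bs.map (cat · s)).map lang).sum = (Bs.map lang).sum * s.lang := by
  simpa [Function.comp_def, lang] using List.sum_map_mul_right Bs lang s.lang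

theorem lang_sum_map_cat_right (r : RE α) (Bs : List (RE α)) :
    ((Bs.map (cat r ·)).map lang).sum = r.lang * (Bs.map lang).sum := by
  simpa [Function.comp_def, lang] using List.sum_map_mul_left Bs lang r.lang

theorem exists_logProd_cover (r : RE α) (d : ℕ) (hd : 1 ≤ d) (h : r.Homog d) :
    ∃ Bs : List (RE α), Bs.length ≤ r.size ∧ (∀ B ∈ Bs, LogProd B) ∧
      r.lang = (Bs.map lang).sum := by
  induction r generalizing d with
  | eps => exact absurd h.eq_zero_of_eps (by omega)
  | char a => exact ⟨[char a], le_rfl, by simpa using LogProd.char a, by simp⟩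
  | union r s ihr ihs =>
    obtain ⟨Bs₁, hlen₁, hlp₁, hcover₁⟩ := ihr d hd (h.mono le_sup_left)
    obtain ⟨Bs₂, hlen₂, hlp₂, hcover₂⟩ := ihs d hd (h.mono le_sup_right)
    refine ⟨Bs₁ ++ Bs₂, ?_, ?_, ?_⟩
    · simp only [List.length_append, size]; omega
    · simpa only [List.mem_append, or_imp, forall_and] using ⟨hlp₁, hlp₂⟩
    · simp [lang, hcover₁, hcover₂]
  | cat r s ihr ihs =>
    obtain ⟨d₁, d₂, hsum, hr, hs⟩ := h.exists_of_cat
    rcases le_or_gt d₂ d₁ with hle | hlt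
    · obtain ⟨Bs, hlen, hlp, hcover⟩ := ihr d₁ (by omega) hr
      refine ⟨Bs.map (cat · s), ?_, ?_, ?_⟩
      · simp only [List.length_map, size]; omega
      · simpa using fun B hB => LogProd.catL (hlp B hB) (hr.of_mem_cover hcover hB) hs hle
      · rw [lang_sum_map_cat_left, ← hcover, lang]
    · obtain ⟨Bs, hlen, hlp, hcover⟩ := ihs d₂ (by omega) hs
      refine ⟨Bs.map (cat r ·), ?_, ?_, ?_⟩
      · simp only [List.length_map, size]; omega
      · simpa using fun B hB => LogProd.catR (hlp B hB) (hs.of_mem_cover hcover hB) hr hlt.le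
      · rw [lang_sum_map_cat_right, ← hcover, lang]

end RE

/-- Every homogeneous regular expression `R` (of degree at least `1`, i.e. not
describing `{ε}`, built without `∅` and without star) is equivalent to a union
`B₁ + ⋯ + B_ℓ` of at most `ℓ ≤ |R|` log-product expressions, where `|R|` is
the number of nodes of the syntax tree of `R`. -/
theorem homog_eq_union_of_logProd {α : Type} (r : RE α) (d : ℕ) (hd : 1 ≤ d)
    (hhom : r.Homog d) :
    ∃ Bs : List (RE α), Bs.length ≤ r.size ∧ (∀ B ∈ Bs, RE.LogProd B) ∧
      ∀ w, w ∈ r.lang ↔ ∃ B ∈ Bs, w ∈ B.lang := by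
  obtain ⟨Bs, hlen, hlp, hcover⟩ := r.exists_logProd_cover d hd hhom
  refine ⟨Bs, hlen, hlp, fun w => ?_⟩
  simp [hcover, Language.mem_list_sum]
end

section
/- For every log-product expression B of degree n ≥ 2, there exist homogeneous expressions X and Y with L(B) = L(X)·L(Y) and n/3 ≤ deg X ≤ 2n/3 and n/3 ≤ deg Y ≤ 2n/3. -/
/-!
Call `s` a cut point of a homogeneous expression `B` of degree `d` if `L(B) = L(X)·L(Y)` with
`X`, `Y` homogeneous of degrees `s` and `d - s`; `0` and `d` always are. A log-product
`B₁·B₂` (or `B₂·B₁`) inherits the cut points of `B₁` (shifted by `d₂` in the second case) and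
gains the cut point `d₁` (resp. `d₂`). Since `d₂ ≤ d₁`, the new gap is no longer than what lies
on its other side, so by induction every gap between consecutive cut points of length `≥ 2` is
no longer than the part of `[0, d]` to its left or the part to its right. A gap straddling the
middle third `[d/3, 2d/3]` would be longer than both, so the middle third contains a cut point.
-/

namespace RE

variable {α : Type}

theorem lang_nonempty_s4 : ∀ r : RE α, ∃ w, w ∈ r.lang
  | eps => ⟨[], Language.nil_mem_one⟩
  | char a => ⟨[a], rfl⟩
  | union r _ =>
    let ⟨w, hw⟩ := r.lang_nonempty_s4
    ⟨w, (Language.mem_add _ _ _).2 (Or.inl hw)⟩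
  | cat r s =>
    let ⟨u, hu⟩ := r.lang_nonempty_s4
    let ⟨v, hv⟩ := s.lang_nonempty_s4
    ⟨u ++ v, Language.append_mem_mul hu hv⟩

theorem Homog.unique {r : RE α} {d e : ℕ} (hd : r.Homog d) (he : r.Homog e) : d = e :=
  let ⟨w, hw⟩ := r.lang_nonempty_s4
  (hd w hw).symm.trans (he w hw)

theorem homog_eps : (eps : RE α).Homog 0 := by
  rintro w rfl
  rfl

theorem homog_char (a : α) : (char a).Homog 1 := by
  rintro w rfl
  rfl

theorem Homog.cat {r s : RE α} {d e : ℕ} (hr : r.Homog d) (hs : s.Homog e) :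
    (cat r s).Homog (d + e) := by
  intro w hw
  obtain ⟨u, hu, v, hv, rfl⟩ := Language.mem_mul.1 hw
  rw [List.length_append, hr u hu, hs v hv]

def SplitsAt (B : RE α) (s t : ℕ) : Prop :=
  ∃ X Y : RE α, X.Homog s ∧ Y.Homog t ∧ B.lang = X.lang * Y.lang

theorem Homog.splitsAt_zero {B : RE α} {d : ℕ} (hB : B.Homog d) : B.SplitsAt 0 d :=
  ⟨eps, B, homog_eps, hB, (one_mul _).symm⟩

theorem Homog.splitsAt_self {B : RE α} {d : ℕ} (hB : B.Homog d) : B.SplitsAt d 0 :=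
  ⟨B, eps, hB, homog_eps, (mul_one _).symm⟩

theorem splitsAt_cat {B₁ B₂ : RE α} {d₁ d₂ : ℕ} (h₁ : B₁.Homog d₁) (h₂ : B₂.Homog d₂) :
    (cat B₁ B₂).SplitsAt d₁ d₂ :=
  ⟨B₁, B₂, h₁, h₂, rfl⟩

theorem SplitsAt.cat_right {B₁ B₂ : RE α} {s t e : ℕ} (h : B₁.SplitsAt s t)
    (h₂ : B₂.Homog e) : (cat B₁ B₂).SplitsAt s (t + e) := by
  obtain ⟨X, Y, hX, hY, hB₁⟩ := h
  exact ⟨X, cat Y B₂, hX, hY.cat h₂, by simp only [lang, hB₁, mul_assoc]⟩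

theorem SplitsAt.cat_left {B₁ B₂ : RE α} {s t e : ℕ} (h₁ : B₁.Homog e)
    (h : B₂.SplitsAt s t) : (cat B₁ B₂).SplitsAt (e + s) t := by
  obtain ⟨X, Y, hX, hY, hB₂⟩ := h
  exact ⟨cat B₁ X, Y, h₁.cat hX, hY, by simp only [lang, hB₂, mul_assoc]⟩

/-- `hleft` and `hright` say that the parts of `[0, d]` left and right of `[a, b]` have length at
most `b - a + 2`, so no gap of `B` can cover `[a, b]`. -/
theorem LogProd.exists_splitsAt_mem_Icc {B : RE α} (hB : B.LogProd) {d a b : ℕ}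
    (hd : B.Homog d) (hab : a ≤ b) (hbd : b ≤ d) (hleft : 2 * a ≤ b + 2)
    (hright : d + a ≤ 2 * b + 2) : ∃ s, a ≤ s ∧ s ≤ b ∧ B.SplitsAt s (d - s) := by
  by_cases ha : a = 0
  · exact ⟨0, ha.le, Nat.zero_le _, hd.splitsAt_zero⟩
  induction hB generalizing d a b with
  | char c =>
    obtain rfl : d = 1 := hd.unique (homog_char c)
    exact ⟨1, by omega, by omega, hd.splitsAt_self⟩
  | @catL B₁ B₂ d₁ d₂ _ h₁ h₂ hle ih =>
    obtain rfl : d = d₁ + d₂ := hd.unique (h₁.cat h₂)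
    by_cases hb : b < d₁
    · obtain ⟨s, has, hsb, hs⟩ := ih h₁ hab hb.le hleft (by omega) ha
      refine ⟨s, has, hsb, ?_⟩
      simpa only [Nat.sub_add_comm (hsb.trans hb.le)] using hs.cat_right h₂
    by_cases had : a ≤ d₁
    · exact ⟨d₁, had, by omega, by simpa only [Nat.add_sub_cancel_left] using splitsAt_cat h₁ h₂⟩
    · exact ⟨d₁ + d₂, by omega, by omega, by simpa only [Nat.sub_self] using hd.splitsAt_self⟩
  | @catR B₁ B₂ d₁ d₂ _ h₁ h₂ hle ih =>
    obtain rfl : d = d₂ + d₁ := hd.unique (h₂.cat h₁)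
    by_cases had : a ≤ d₂
    · exact ⟨d₂, had, by omega, by simpa only [Nat.add_sub_cancel_left] using splitsAt_cat h₂ h₁⟩
    · obtain ⟨s, has, hsb, hs⟩ := ih (a := a - d₂) (b := b - d₂) h₁ (by omega) (by omega)
        (by omega) (by omega) (by omega)
      refine ⟨d₂ + s, by omega, by omega, ?_⟩
      simpa only [Nat.add_sub_add_left] using SplitsAt.cat_left h₂ hs

end RE

/-- For every log-product expression `B` of degree `n ≥ 2` there are homogeneous
expressions `X` and `Y` with `L(B) = L(X)·L(Y)` and
`n/3 ≤ deg X ≤ 2n/3` and `n/3 ≤ deg Y ≤ 2n/3`. -/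
theorem logProd_balanced_split {α : Type} (B : RE α) (n : ℕ) (hn : 2 ≤ n)
    (hB : RE.LogProd B) (hhom : B.Homog n) :
    ∃ (X Y : RE α) (dX dY : ℕ), X.Homog dX ∧ Y.Homog dY ∧
      B.lang = X.lang * Y.lang ∧
      n ≤ 3 * dX ∧ 3 * dX ≤ 2 * n ∧ n ≤ 3 * dY ∧ 3 * dY ≤ 2 * n := by
  obtain ⟨s, hs₁, hs₂, X, Y, hX, hY, hXY⟩ := hB.exists_splitsAt_mem_Icc (a := (n + 2) / 3)
    (b := 2 * n / 3) hhom (by omega) (by omega) (by omega) (by omega)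
  exact ⟨X, Y, s, n - s, hX, hY, hXY, by omega, by omega, by omega, by omega⟩
end
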